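/- Let G be a K-IC structure with inner vertex set V_I, let i be an inner vertex, let j be a vertex not in the rooted tree T_i, and let p ∈ V_NI(i) be a non-inner vertex of T_i with an edge (p, j) ∈ E. Then there exists a directed path in G from j back to p; consequently (using the edge from p to j) G contains a cycle consisting only of non-inner vertices and passing through p and j. (Claim used in Lemma 1, Case ii, and in Theorem 2, Part 2) -/

import Mathlib

namespace ICPaper

variable {V : Type*}

/-- A directed cycle: a nonempty list of distinct vertices, consecutive vertices joined by
edges, and an edge from the last vertex back to the first (positive length). -/
def IsCycle (E : V → V → Prop) (l : List V) : Prop :=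
  l ≠ [] ∧ l.Nodup ∧ l.Chain' E ∧
    ∃ a b, l.getLast? = some a ∧ l.head? = some b ∧ E a b

/-- A directed path from `a` to `b`: consecutive vertices joined by edges, distinct vertices. -/
def IsPathList (E : V → V → Prop) (a b : V) (l : List V) : Prop :=
  l.Chain' E ∧ l.head? = some a ∧ l.getLast? = some b ∧ l.Nodup

/-- An I-path: a directed path from an inner vertex `a` to a different inner vertex `b`
all of whose intermediate vertices are non-inner. -/
def IsIPath (E : V → V → Prop) (VI : Set V) (a b : V) (l : List V) : Prop :=
  a ∈ VI ∧ b ∈ VI ∧ a ≠ b ∧ IsPathList E a b l ∧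
    ∀ v ∈ l, v ≠ a → v ≠ b → v ∉ VI

/-- `G = (V, E)` is a `K`-IC structure with inner vertex set `VI`:
(0) `|VI| = K`; (1) no cycle contains exactly one inner vertex (no I-cycle);
(2) between any ordered pair of distinct inner vertices there is exactly one I-path;
(3) every vertex and every edge lies on one of these I-paths. -/
def IsICStructure (E : V → V → Prop) (VI : Set V) (K : ℕ) : Prop :=
  VI.ncard = K ∧
  (¬ ∃ l, IsCycle E l ∧ (∃! v, v ∈ l ∧ v ∈ VI)) ∧
  (∀ a ∈ VI, ∀ b ∈ VI, a ≠ b → ∃! l, IsIPath E VI a b l) ∧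
  (∀ v : V, ∃ a b l, IsIPath E VI a b l ∧ v ∈ l) ∧
  (∀ u w : V, E u w → ∃ a b l, IsIPath E VI a b l ∧ [u, w] <:+: l)

/-- Vertex set of the rooted tree `T i`: the union of the I-paths starting at `i`. -/
def treeVerts (E : V → V → Prop) (VI : Set V) (i : V) : Set V :=
  {v | ∃ b l, IsIPath E VI i b l ∧ v ∈ l}

/-- `(u, w)` is an edge of the rooted tree `T i`. -/
def treeEdge (E : V → V → Prop) (VI : Set V) (i u w : V) : Prop :=
  ∃ b l, IsIPath E VI i b l ∧ [u, w] <:+: l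

/-- `V_NI(i)`: the non-inner vertices of the rooted tree `T i`. -/
def VNI (E : V → V → Prop) (VI : Set V) (i : V) : Set V :=
  treeVerts E VI i \ VI

/-- `N^+_{T i}(i)`: the out-neighbourhood of `i` in the rooted tree `T i`. -/
def NplusT (E : V → V → Prop) (VI : Set V) (i : V) : Set V :=
  {w | treeEdge E VI i i w}

/-- `N^+_G(v)`: the out-neighbourhood of `v` in `G`. -/
def NplusG (E : V → V → Prop) (v : V) : Set V := {w | E v w}

/-- The quantity `|{v ∈ V_NI(i) : j ∈ N^+_G(v)}|`; this is `a_{i,j}` when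
`j ∈ V_NI(i) \ N^+_{T i}(i)` and `b_{i,j}` when `j ∉ V(T i)`. -/
noncomputable def coeffCount (E : V → V → Prop) (VI : Set V) (i j : V) : ℕ :=
  {v | v ∈ VNI E VI i ∧ E v j}.ncard

/-- Condition c1: `a_{i,j}` is odd for every inner vertex `i` and every
`j ∈ V_NI(i) \ N^+_{T i}(i)`. -/
def CondC1 (E : V → V → Prop) (VI : Set V) : Prop :=
  ∀ i ∈ VI, ∀ j ∈ VNI E VI i, j ∉ NplusT E VI i → Odd (coeffCount E VI i j)

/-- Condition c2: `b_{i,j} = 0` for every inner vertex `i` and every `j ∉ V(T i)`. -/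
def CondC2 (E : V → V → Prop) (VI : Set V) : Prop :=
  ∀ i ∈ VI, ∀ j, j ∉ treeVerts E VI i → coeffCount E VI i j = 0

/-- Construction 1, symbol `W_I = ⊕_{k ∈ V_I} x_k`. -/
noncomputable def WI {F : Type*} [AddCommMonoid F] (VI : Set V) (x : V → F) : F :=
  ∑ᶠ k ∈ VI, x k

/-- Construction 1, symbol `W_j = x_j ⊕ (⊕_{q ∈ N^+_G(j)} x_q)`. -/
noncomputable def Wsym {F : Type*} [AddCommMonoid F] (E : V → V → Prop) (x : V → F)
    (j : V) : F :=
  x j + ∑ᶠ q ∈ NplusG E j, x q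

/-- Algorithm 1, the combination `Z_i = W_I ⊕ (⊕_{j ∈ V_NI(i)} W_j)`. -/
noncomputable def Z {F : Type*} [AddCommMonoid F] (E : V → V → Prop) (VI : Set V)
    (x : V → F) (i : V) : F :=
  WI VI x + ∑ᶠ j ∈ VNI E VI i, Wsym E x j

end ICPaper

/-!
Follow the I-path through `p` from `i` to `p`, take the edge `p → j`, then follow an I-path
through this edge from `j` to its end `b`; every vertex strictly between `i` and `b` is non-inner.
If the two stretches `i → p` and `j → b` meet, splicing them at the first common vertex along
the second one gives a non-inner path from `j` back to `p`. If they are disjoint, the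
concatenation is an I-path from `i` to `b` through `j` when `b ≠ i`, contradicting `j ∉ T i`,
and an I-cycle when `b = i`.
-/

namespace ICPaper

variable {V : Type*} {E : V → V → Prop} {VI : Set V}

theorem exists_eq_append_cons_first_mem {l s : List V} (h : ∃ v ∈ l, v ∈ s) :
    ∃ A v B, l = A ++ v :: B ∧ v ∈ s ∧ ∀ w ∈ A, w ∉ s := by
  classical
  cases hfind : l.find? (· ∈ s) with
  | none =>
    obtain ⟨v, hv, hvs⟩ := h
    exact absurd (by simpa using hvs) (List.find?_eq_none.mp hfind v hv)
  | some v =>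
    obtain ⟨hvs, A, B, rfl, hA⟩ := List.find?_eq_some_iff_append.mp hfind
    exact ⟨A, v, B, rfl, by simpa using hvs, fun w hw => by simpa using hA w hw⟩

section Paths

variable {a b x : V} {l : List V}

theorem isPathList_iff :
    IsPathList E a b l ↔ l.IsChain E ∧ l.head? = some a ∧ l.getLast? = some b ∧ l.Nodup :=
  Iff.rfl

theorem IsPathList.head_mem (h : IsPathList E a b l) : a ∈ l :=
  List.mem_of_mem_head? h.2.1

theorem IsPathList.getLast_mem (h : IsPathList E a b l) : b ∈ l :=
  List.mem_of_mem_getLast? h.2.2.1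

theorem IsPathList.isCycle (h : IsPathList E a b l) (hba : E b a) : IsCycle E l :=
  ⟨List.ne_nil_of_mem h.head_mem, h.2.2.2, h.1, b, a, h.2.2.1, h.2.1, hba⟩

theorem IsPathList.prefix {l₁ l₂ : List V} (h : IsPathList E a b (l₁ ++ x :: l₂)) :
    IsPathList E a x (l₁ ++ [x]) := by
  obtain ⟨hch, hhead, -, hnd⟩ := isPathList_iff.mp h
  rw [← List.singleton_append, ← List.append_assoc] at hch hnd
  refine ⟨hch.left_of_append, ?_, List.getLast?_concat, hnd.sublist (List.sublist_append_left _ _)⟩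
  simpa [List.head?_append] using hhead

theorem IsPathList.suffix {l₁ l₂ : List V} (h : IsPathList E a b (l₁ ++ x :: l₂)) :
    IsPathList E x b (x :: l₂) := by
  obtain ⟨hch, -, hlast, hnd⟩ := isPathList_iff.mp h
  rw [List.getLast?_append_of_ne_nil _ (List.cons_ne_nil _ _)] at hlast
  exact ⟨hch.right_of_append, rfl, hlast, hnd.sublist (List.sublist_append_right _ _)⟩

theorem IsPathList.append {c d : V} {l₁ l₂ : List V} (h₁ : IsPathList E a b l₁)
    (h₂ : IsPathList E c d l₂) (hbc : E b c) (hdisj : ∀ v ∈ l₁, v ∉ l₂) :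
    IsPathList E a d (l₁ ++ l₂) := by
  obtain ⟨hch₁, hhead₁, hlast₁, hnd₁⟩ := isPathList_iff.mp h₁
  obtain ⟨hch₂, hhead₂, hlast₂, hnd₂⟩ := isPathList_iff.mp h₂
  refine ⟨hch₁.append hch₂ ?_, by simp [List.head?_append, hhead₁],
    by simp [List.getLast?_append, hlast₂], List.nodup_append.mpr ⟨hnd₁, hnd₂, ?_⟩⟩
  · simp_all
  · rintro v hv w hw rfl
    exact hdisj v hv hw

theorem IsPathList.splice {c y : V} {l₁ l₂ l₃ l₄ : List V} (h₁ : IsPathList E a x (l₁ ++ c :: l₂))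
    (h₂ : IsPathList E y b (l₃ ++ c :: l₄)) (hdisj : ∀ v ∈ l₁, v ∉ l₄) :
    IsPathList E a b (l₁ ++ c :: l₄) := by
  obtain ⟨hch₁, hhead₁, -, hnd₁⟩ := isPathList_iff.mp h₁.prefix
  obtain ⟨hch₂, -, hlast₂, hnd₂⟩ := isPathList_iff.mp h₂.suffix
  have hch : (l₁ ++ c :: l₄).IsChain E := by
    simpa using hch₁.append_overlap (l₃ := l₄) hch₂ (List.cons_ne_nil _ _)
  refine ⟨hch, by simpa [List.head?_append] using hhead₁,
    by rwa [List.getLast?_append_of_ne_nil _ (List.cons_ne_nil _ _)], ?_⟩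
  · refine List.nodup_append.mpr ⟨hnd₁.sublist (List.sublist_append_left _ _), hnd₂, ?_⟩
    rintro v hv w hw rfl
    rcases List.mem_cons.mp hw with rfl | hw
    · exact (List.nodup_append.mp hnd₁).2.2 v hv v (List.mem_singleton_self v) rfl
    · exact hdisj v hv hw

end Paths

section IPaths

variable {a b x : V} {l : List V}

theorem IsIPath.isPathList (h : IsIPath E VI a b l) : IsPathList E a b l :=
  h.2.2.2.1

theorem IsIPath.mem_treeVerts_of_mem {k : V}
    (hconn : ∀ a ∈ VI, ∀ b ∈ VI, a ≠ b → ∃ l, IsIPath E VI a b l) (h : IsIPath E VI a b l)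
    (hk : k ∈ VI) : k ∈ treeVerts E VI a := by
  obtain rfl | hka := eq_or_ne k a
  · exact ⟨b, l, h, h.isPathList.head_mem⟩
  · obtain ⟨l', hl'⟩ := hconn a h.1 k hk hka.symm
    exact ⟨k, l', hl', hl'.isPathList.getLast_mem⟩

theorem IsIPath.exists_eq_cons_append (h : IsIPath E VI a b l) :
    ∃ m, l = a :: (m ++ [b]) ∧ ∀ v ∈ m, v ∉ VI := by
  obtain ⟨-, -, hab, ⟨-, hhead, hlast, hnd⟩, hinner⟩ := h
  obtain ⟨t, rfl⟩ := List.head?_eq_some_iff.mp hhead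
  have ht : t ≠ [] := by rintro rfl; simp_all
  have hlast' : t.getLast? = some b := by
    rwa [← List.getLast?_append_of_ne_nil [a] ht]
  obtain ⟨m, rfl⟩ := List.getLast?_eq_some_iff.mp hlast'
  obtain ⟨ha, hnd⟩ := List.nodup_cons.mp hnd
  refine ⟨m, rfl, fun v hv => hinner v (by simp [hv]) ?_ ?_⟩
  · rintro rfl
    exact ha (List.mem_append_left _ hv)
  · rintro rfl
    exact (List.nodup_append.mp hnd).2.2 v hv v (List.mem_singleton_self v) rfl

theorem IsIPath.exists_paths_through (h : IsIPath E VI a b l) (hx : x ∈ l) (hxVI : x ∉ VI) :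
    (∃ γ, IsPathList E a x (a :: γ) ∧ ∀ v ∈ γ, v ∉ VI) ∧
      ∃ δ, IsPathList E x b (δ ++ [b]) ∧ ∀ v ∈ δ, v ∉ VI := by
  obtain ⟨m, rfl, hm⟩ := h.exists_eq_cons_append
  have hxm : x ∈ m := by
    rcases List.mem_cons.mp hx with rfl | hx
    · exact absurd h.1 hxVI
    rcases List.mem_append.mp hx with hx | hx
    · exact hx
    · exact absurd (List.mem_singleton.mp hx ▸ h.2.1) hxVI
  obtain ⟨m₁, m₂, rfl⟩ := List.append_of_mem hxm
  have hpath : IsPathList E a b ((a :: m₁) ++ x :: (m₂ ++ [b])) := by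
    simpa using h.isPathList
  refine ⟨⟨m₁ ++ [x], by simpa using hpath.prefix, fun v hv => hm v ?_⟩,
    ⟨x :: m₂, by simpa using hpath.suffix, fun v hv => hm v ?_⟩⟩
  · simp at hv ⊢; tauto
  · simp at hv ⊢; tauto

end IPaths

def IsICycle (E : V → V → Prop) (VI : Set V) (l : List V) : Prop :=
  IsCycle E l ∧ ∃! v, v ∈ l ∧ v ∈ VI

section Splicing

variable {i j p b : V} {γ δ : List V}

theorem exists_noninner_path_of_meet (hγ : IsPathList E i p (i :: γ)) (hγVI : ∀ v ∈ γ, v ∉ VI)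
    (hδ : IsPathList E j b (δ ++ [b])) (hδVI : ∀ v ∈ δ, v ∉ VI) (hmeet : ∃ v ∈ δ, v ∈ γ) :
    ∃ l, IsPathList E j p l ∧ ∀ v ∈ l, v ∉ VI := by
  obtain ⟨A, v, A₂, rfl, hvγ, hA⟩ := exists_eq_append_cons_first_mem hmeet
  obtain ⟨B, B₂, rfl⟩ := List.append_of_mem hvγ
  have hδ' : IsPathList E j b (A ++ v :: (A₂ ++ [b])) := by simpa using hδ
  have hγ' : IsPathList E i p ((i :: B) ++ v :: B₂) := by simpa using hγ
  refine ⟨A ++ v :: B₂, hδ'.splice hγ' fun w hw hwB₂ => hA w hw (by simp [hwB₂]), ?_⟩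
  intro w hw
  rcases List.mem_append.mp hw with hw | hw
  · exact hδVI w (by simp [hw])
  · exact hγVI w (by simp at hw ⊢; tauto)

theorem isIPath_cons_append (hi : i ∈ VI) (hb : b ∈ VI) (hib : i ≠ b)
    (hγ : IsPathList E i p (i :: γ)) (hγVI : ∀ v ∈ γ, v ∉ VI)
    (hδ : IsPathList E j b (δ ++ [b])) (hδVI : ∀ v ∈ δ, v ∉ VI) (hpj : E p j)
    (hdisj : ∀ v ∈ δ, v ∉ γ) :
    IsIPath E VI i b (i :: γ ++ (δ ++ [b])) := by
  refine ⟨hi, hb, hib, hγ.append hδ hpj ?_, ?_⟩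
  · intro v hv hv'
    rcases List.mem_cons.mp hv with rfl | hv <;> rcases List.mem_append.mp hv' with hv' | hv'
    · exact hδVI v hv' hi
    · exact hib (List.mem_singleton.mp hv')
    · exact hdisj v hv' hv
    · exact hγVI v hv (List.mem_singleton.mp hv' ▸ hb)
  · intro v hv hvi hvb
    simp only [List.cons_append, List.mem_cons, List.mem_append, List.mem_nil_iff, or_false] at hv
    rcases hv with rfl | hv | hv | rfl
    exacts [absurd rfl hvi, hγVI v hv, hδVI v hv, absurd rfl hvb]

theorem isICycle_append_cons (hi : i ∈ VI)
    (hγ : IsPathList E i p (i :: γ)) (hγVI : ∀ v ∈ γ, v ∉ VI)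
    (hδ : IsPathList E j i (δ ++ [i])) (hδVI : ∀ v ∈ δ, v ∉ VI) (hpj : E p j)
    (hdisj : ∀ v ∈ δ, v ∉ γ) :
    IsICycle E VI (δ ++ i :: γ) := by
  refine ⟨(hδ.splice (l₃ := []) hγ hdisj).isCycle hpj, i, ⟨by simp, hi⟩, ?_⟩
  rintro v ⟨hv, hvVI⟩
  simp only [List.mem_append, List.mem_cons] at hv
  rcases hv with hv | rfl | hv
  exacts [absurd hvVI (hδVI v hv), rfl, absurd hvVI (hγVI v hv)]

end Splicing

end ICPaper

open ICPaper

theorem path_back_and_noninner_cycle_general {V : Type*}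
    (E : V → V → Prop) (VI : Set V) (K : ℕ) (hIC : IsICStructure E VI K)
    (i : V) (hi : i ∈ VI) (j : V) (hj : j ∉ treeVerts E VI i)
    (p : V) (hp : p ∈ VNI E VI i) (hpj : E p j) :
    (∃ l, IsPathList E j p l) ∧
    (∃ l, IsCycle E l ∧ (∀ v ∈ l, v ∉ VI) ∧ p ∈ l ∧ j ∈ l) := by
  obtain ⟨-, hNoICycle, hUniq, -, hEdge⟩ := hIC
  obtain ⟨⟨c, P, hP, hpP⟩, hpVI⟩ := hp
  obtain ⟨a, b, Q, hQ, hpjQ⟩ := hEdge p j hpj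
  have hjVI : j ∉ VI := fun hjI =>
    hj (hP.mem_treeVerts_of_mem (fun a ha b hb hab => (hUniq a ha b hb hab).exists) hjI)
  obtain ⟨γ, hγ, hγVI⟩ := (hP.exists_paths_through hpP hpVI).1
  obtain ⟨δ, hδ, hδVI⟩ := (hQ.exists_paths_through (hpjQ.subset (by simp)) hjVI).2
  obtain ⟨l, hl, hlVI⟩ : ∃ l, IsPathList E j p l ∧ ∀ v ∈ l, v ∉ VI := by
    by_cases hmeet : ∃ v ∈ δ, v ∈ γ
    · exact exists_noninner_path_of_meet hγ hγVI hδ hδVI hmeet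
    have hdisj : ∀ v ∈ δ, v ∉ γ := fun v hv hvγ => hmeet ⟨v, hv, hvγ⟩
    exfalso
    obtain rfl | hbi := eq_or_ne b i
    · exact hNoICycle ⟨_, isICycle_append_cons hi hγ hγVI hδ hδVI hpj hdisj⟩
    · exact hj ⟨b, _, isIPath_cons_append hi hQ.2.1 hbi.symm hγ hγVI hδ hδVI hpj hdisj,
        by simp [hδ.head_mem]⟩
  exact ⟨⟨l, hl⟩, l, hl.isCycle hpj, hlVI, hl.getLast_mem, hl.head_mem⟩

/-- **Claim (Lemma 1, Case ii / Theorem 2, Part 2).** In a `K`-IC structure, if `i` is an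
inner vertex, `j` a vertex not in the rooted tree `T i`, and `p ∈ V_NI(i)` has an edge to
`j`, then there is a directed path in `G` from `j` back to `p`; consequently `G` contains a
cycle consisting only of non-inner vertices passing through `p` and `j`. -/
theorem path_back_and_noninner_cycle {V : Type*} [Fintype V] [DecidableEq V]
    (E : V → V → Prop) (VI : Set V) (K : ℕ) (hIC : IsICStructure E VI K)
    (i : V) (hi : i ∈ VI) (j : V) (hj : j ∉ treeVerts E VI i)
    (p : V) (hp : p ∈ VNI E VI i) (hpj : E p j) :
    (∃ l, IsPathList E j p l) ∧
    (∃ l, IsCycle E l ∧ (∀ v ∈ l, v ∉ VI) ∧ p ∈ l ∧ j ∈ l) :=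
  path_back_and_noninner_cycle_general E VI K hIC i hi j hj p hp hpj
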